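/- Let $p \in [0,1)$ and let $A_1, \ldots, A_n$ be events in a probability space, each with probability at most $p$, such that each $A_i$ is mutually independent of all but at most $D$ of the other events. If $4 p D \leq 1$ and $4p \le 1$, then with positive probability none of the events $A_1, \ldots, A_n$ occur. -/
import Mathlib


open MeasureTheory in
theorem stmt_19 {Ω : Type*} [MeasurableSpace Ω] (μ : Measure Ω)
    [IsProbabilityMeasure μ] (n : ℕ) (A : Fin n → Set Ω)
    (hA : ∀ i, MeasurableSet (A i))
    (p : ℝ) (hp0 : 0 ≤ p) (hp1 : p < 1)
    (hprob : ∀ i, (μ (A i)).toReal ≤ p)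
    (D : ℕ) (Dep : Fin n → Finset (Fin n)) (hDep : ∀ i, (Dep i).card ≤ D)
    (hindep : ∀ i : Fin n, ∀ S T : Finset (Fin n), Disjoint S T →
        (∀ j ∈ S, j ≠ i ∧ j ∉ Dep i) → (∀ j ∈ T, j ≠ i ∧ j ∉ Dep i) →
        μ (A i ∩ ((⋂ j ∈ S, A j) ∩ ⋂ j ∈ T, (A j)ᶜ)) =
          μ (A i) * μ ((⋂ j ∈ S, A j) ∩ ⋂ j ∈ T, (A j)ᶜ))
    (hpD : 4 * p * D ≤ 1) (hp4 : 4 * p ≤ 1) :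
    0 < μ (⋂ i, (A i)ᶜ) := by
  classical
  have hfin : ∀ X : Set Ω, μ X ≠ ⊤ := fun X => measure_ne_top μ X
  have hν0 : ∀ X : Set Ω, 0 ≤ (μ X).toReal := fun X => ENNReal.toReal_nonneg
  have hmono : ∀ {X Y : Set Ω}, X ⊆ Y → (μ X).toReal ≤ (μ Y).toReal := fun h =>
    ENNReal.toReal_mono (hfin _) (measure_mono h)
  have hsplit : ∀ (X Y : Set Ω), MeasurableSet Y →
      (μ X).toReal = (μ (X ∩ Y)).toReal + (μ (X ∩ Yᶜ)).toReal := by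
    intro X Y hY
    have h := measure_inter_add_diff (μ := μ) X hY
    rw [Set.diff_eq] at h
    rw [← ENNReal.toReal_add (hfin _) (hfin _), h]
  have hmeasB : ∀ S : Finset (Fin n), MeasurableSet (⋂ j ∈ S, (A j)ᶜ) := by
    intro S
    exact MeasurableSet.biInter (Set.to_countable _) (fun j _ => (hA j).compl)
  -- independence in real form
  have hindR : ∀ (i : Fin n) (S2 : Finset (Fin n)),
      (∀ j ∈ S2, j ≠ i ∧ j ∉ Dep i) →
      (μ (A i ∩ ⋂ j ∈ S2, (A j)ᶜ)).toReal
        = (μ (A i)).toReal * (μ (⋂ j ∈ S2, (A j)ᶜ)).toReal := by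
    intro i S2 hS2
    have h := hindep i ∅ S2 (Finset.disjoint_empty_left S2) (by simp) hS2
    simp only [Finset.notMem_empty, Set.iInter_of_empty, Set.iInter_univ,
      Set.univ_inter] at h
    rw [h, ENNReal.toReal_mul]
  -- key induction
  have key : ∀ m : ℕ, ∀ S : Finset (Fin n), S.card ≤ m →
      0 < (μ (⋂ j ∈ S, (A j)ᶜ)).toReal ∧
      ∀ i, i ∉ S → (μ (A i ∩ ⋂ j ∈ S, (A j)ᶜ)).toReal
        ≤ 2 * p * (μ (⋂ j ∈ S, (A j)ᶜ)).toReal := by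
    intro m
    induction m with
    | zero =>
      intro S hS
      have hSe : S = ∅ := Finset.card_eq_zero.mp (Nat.le_zero.mp hS)
      subst hSe
      constructor
      · simp [measure_univ]
      · intro i _
        simp only [Finset.notMem_empty, Set.iInter_of_empty, Set.iInter_univ,
          Set.inter_univ, measure_univ, ENNReal.toReal_one, mul_one]
        calc (μ (A i)).toReal ≤ p := hprob i
          _ ≤ 2 * p := by linarith
    | succ m ih =>
      intro S hS
      rcases Nat.lt_or_ge S.card (m + 1) with hlt | hge
      · exact ih S (Nat.lt_succ_iff.mp hlt)
      have hcard : S.card = m + 1 := le_antisymm hS hge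
      -- positivity
      have hpos : 0 < (μ (⋂ j ∈ S, (A j)ᶜ)).toReal := by
        have hne : S.Nonempty := Finset.card_pos.mp (by omega)
        obtain ⟨i, hiS⟩ := hne
        set S' := S.erase i with hS'
        have hcard' : S'.card ≤ m := by
          rw [hS', Finset.card_erase_of_mem hiS]
          omega
        obtain ⟨hpos', hbnd'⟩ := ih S' hcard'
        have hbndi := hbnd' i (Finset.notMem_erase i S)
        have hse : (⋂ j ∈ S, (A j)ᶜ) = (A i)ᶜ ∩ ⋂ j ∈ S', (A j)ᶜ := by
          rw [← Finset.insert_erase hiS, Finset.set_biInter_insert]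
        have hsp := hsplit (⋂ j ∈ S', (A j)ᶜ) (A i) (hA i)
        have hcomm : (⋂ j ∈ S', (A j)ᶜ) ∩ A i = A i ∩ ⋂ j ∈ S', (A j)ᶜ :=
          Set.inter_comm _ _
        have hcomm2 : (⋂ j ∈ S', (A j)ᶜ) ∩ (A i)ᶜ = (A i)ᶜ ∩ ⋂ j ∈ S', (A j)ᶜ :=
          Set.inter_comm _ _
        rw [hcomm, hcomm2] at hsp
        rw [hse]
        have h2p : 2 * p ≤ 1 / 2 := by linarith
        nlinarith [hν0 (A i ∩ ⋂ j ∈ S', (A j)ᶜ)]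
      refine ⟨hpos, ?_⟩
      intro i hiS
      set S1 := S.filter (· ∈ Dep i) with hS1def
      set S2 := S.filter (· ∉ Dep i) with hS2def
      have hS2cond : ∀ j ∈ S2, j ≠ i ∧ j ∉ Dep i := by
        intro j hj
        rw [hS2def, Finset.mem_filter] at hj
        exact ⟨fun h => hiS (h ▸ hj.1), hj.2⟩
      have hpart : S1 ∪ S2 = S := Finset.filter_union_filter_not_eq _ S
      have hcards : S1.card + S2.card = S.card := by
        rw [hS1def, hS2def]
        exact Finset.card_filter_add_card_filter_not _
      by_cases hS1e : S1 = ∅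
      · -- all of S is independent of A i
        have hS2S : S2 = S := by rw [← hpart, hS1e, Finset.empty_union]
        rw [← hS2S]
        rw [hindR i S2 hS2cond]
        have hb : 0 ≤ (μ (⋂ j ∈ S2, (A j)ᶜ)).toReal := hν0 _
        nlinarith [hprob i, hν0 (A i)]
      · -- the main case
        have hS1ne : 0 < S1.card := Finset.card_pos.mpr (Finset.nonempty_iff_ne_empty.mpr hS1e)
        have hcard2 : S2.card ≤ m := by omega
        obtain ⟨hposB, hbndB⟩ := ih S2 hcard2
        set B := ⋂ j ∈ S2, (A j)ᶜ with hBdef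
        have hS2sub : S2 ⊆ S := Finset.filter_subset _ S
        have hsub : (⋂ j ∈ S, (A j)ᶜ) ⊆ B := by
          intro x hx
          simp only [hBdef, Set.mem_iInter] at *
          exact fun j hj => hx j (hS2sub hj)
        -- A i ∩ ⋂_S ⊆ A i ∩ B, independence bound
        have hAiB : (μ (A i ∩ B)).toReal ≤ p * (μ B).toReal := by
          rw [hBdef, hindR i S2 hS2cond]
          exact mul_le_mul_of_nonneg_right (hprob i) (hν0 _)
        -- union bound
        set U := ⋃ j ∈ S1, A j with hUdef
        have hUmeas : MeasurableSet U :=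
          MeasurableSet.biUnion (Set.to_countable _) (fun j _ => hA j)
        have hUB : (μ (B ∩ U)).toReal ≤ (1 / 2) * (μ B).toReal := by
          have hsubU : B ∩ U ⊆ ⋃ j ∈ S1, (A j ∩ B) := by
            intro x hx
            obtain ⟨hxB, hxU⟩ := hx
            simp only [hUdef, Set.mem_iUnion] at hxU
            obtain ⟨j, hj, hxj⟩ := hxU
            simp only [Set.mem_iUnion]
            exact ⟨j, hj, hxj, hxB⟩
          have h1 : (μ (B ∩ U)).toReal ≤ (∑ j ∈ S1, μ (A j ∩ B)).toReal := by
            refine ENNReal.toReal_mono ?_ (le_trans (measure_mono hsubU)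
              (measure_biUnion_finset_le S1 _))
            exact ENNReal.sum_ne_top.mpr (fun j _ => hfin _)
          rw [ENNReal.toReal_sum (fun j _ => hfin _)] at h1
          have h2 : ∑ j ∈ S1, (μ (A j ∩ B)).toReal ≤ ∑ j ∈ S1, 2 * p * (μ B).toReal := by
            refine Finset.sum_le_sum (fun j hj => ?_)
            have hjS2 : j ∉ S2 := by
              rw [hS1def, Finset.mem_filter] at hj
              rw [hS2def, Finset.mem_filter]
              tauto
            exact hbndB j hjS2
          rw [Finset.sum_const, nsmul_eq_mul] at h2
          have hD1 : (S1.card : ℝ) ≤ D := by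
            have : S1.card ≤ (Dep i).card := by
              refine Finset.card_le_card ?_
              intro j hj
              rw [hS1def, Finset.mem_filter] at hj
              exact hj.2
            exact_mod_cast le_trans this (hDep i)
          have hDD : (S1.card : ℝ) * (2 * p * (μ B).toReal) ≤ (1/2) * (μ B).toReal := by
            nlinarith [hν0 B, hp0, mul_le_mul_of_nonneg_right hD1 (mul_nonneg (mul_nonneg (by norm_num : (0:ℝ) ≤ 2) hp0) (hν0 B))]
          linarith
        -- splitting identity
        have hBsplit : (μ B).toReal = (μ (B ∩ U)).toReal + (μ (⋂ j ∈ S, (A j)ᶜ)).toReal := by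
          have h := hsplit B U hUmeas
          have heq : B ∩ Uᶜ = ⋂ j ∈ S, (A j)ᶜ := by
            ext x
            simp only [hBdef, hUdef, Set.mem_inter_iff, Set.mem_iInter, Set.mem_compl_iff,
              Set.mem_iUnion, not_exists, hS1def, hS2def, Finset.mem_filter]
            constructor
            · rintro ⟨h2, h1⟩ j hj
              by_cases hd : j ∈ Dep i
              · exact h1 j ⟨hj, hd⟩
              · exact h2 j ⟨hj, hd⟩
            · intro hall
              exact ⟨fun j hj => hall j hj.1, fun j hj => hall j hj.1⟩
          rw [heq] at h
          exact h
        have hge2 : (1/2) * (μ B).toReal ≤ (μ (⋂ j ∈ S, (A j)ᶜ)).toReal := by linarith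
        have hfinal : (μ (A i ∩ ⋂ j ∈ S, (A j)ᶜ)).toReal ≤ (μ (A i ∩ B)).toReal :=
          hmono (Set.inter_subset_inter_right _ hsub)
        nlinarith [hν0 (⋂ j ∈ S, (A j)ᶜ)]
  -- conclude
  have hfinal := (key n Finset.univ (by simp)).1
  have heq : (⋂ i, (A i)ᶜ) = ⋂ j ∈ (Finset.univ : Finset (Fin n)), (A j)ᶜ := by
    simp
  rw [heq]
  rw [pos_iff_ne_zero]
  intro h0
  rw [h0] at hfinal
  simp at hfinal
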